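/- arXiv:1101.0881 — 3 statements merged into one kernel-verified Lean document; each statement's English description precedes it below -/
import Mathlib

section
/- Let H be a real Hilbert space, {T_n} a sequence of nonexpansive self-mappings of H with a common fixed point, F the (nonempty closed convex) set of common fixed points of {T_n}, and A : H → H a κ-strongly monotone and η-lipschitzian mapping with κ, η > 0 and η² < 2κ. Let {λ_n} be a sequence in [0,1] such that ∑_{n=1}^∞ λ_n = ∞. Suppose that for every pair (x, u) ∈ H × H, the sequence {x_n} defined by x_1 = x and x_{n+1} = λ_n u + (1 − λ_n) T_n x_n for n ∈ ℕ converges strongly to P_F(u). Let y ∈ H and define {y_n} by y_1 = y and y_{n+1} = (I − λ_n A) T_n y_n for n ∈ ℕ. Then {y_n} converges strongly to the unique point z ∈ F satisfying ⟨w − z, Az⟩ ≥ 0 for all w ∈ F. -/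
/-!
Since `η² < 2κ`, the map `I - A` is a contraction, hence so is `P_F ∘ (I - A)`, and its fixed
point `z` is exactly the solution of the variational inequality (uniqueness comes from strong
monotonicity). Compare the HSDM sequence `y_n` with the Halpern sequence `x_n` anchored at
`u = z - A z`, which converges to `P_F u = z` by hypothesis: with `K < 1` the Lipschitz constant of
`I - A`, the distance `d_n = ‖y_n - x_n‖` satisfies
`d_{n+1} ≤ (1 - λ_n (1 - K)) d_n + λ_n K ‖x_n - z‖`, and Xu's lemma forces `d_n → 0`.
-/

open RealInnerProductSpace Filter Topology Finset
open scoped NNReal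

section Recursion

variable {a b d : ℕ → ℝ}

lemma le_exp_sum_sub_sum_mul_add_of_le_one_sub_mul_add_mul {ε : ℝ} {N : ℕ}
    (ha : ∀ n, a n ∈ Set.Icc (0 : ℝ) 1) (hdN : 0 ≤ d N) (hε : 0 ≤ ε) (hb : ∀ n ≥ N, b n ≤ ε)
    (hrec : ∀ n, d (n + 1) ≤ (1 - a n) * d n + a n * b n) :
    ∀ n ≥ N, d n ≤ Real.exp (∑ i ∈ range N, a i - ∑ i ∈ range n, a i) * d N + ε := by
  intro n hn
  induction n, hn using Nat.le_induction with
  | base => simpa using hε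
  | succ n hn ih =>
    have hexp : 1 - a n ≤ Real.exp (-a n) := by linarith [Real.add_one_le_exp (-a n)]
    have h1a : 0 ≤ 1 - a n := sub_nonneg.2 (ha n).2
    calc d (n + 1) ≤ (1 - a n) * d n + a n * b n := hrec n
      _ ≤ (1 - a n) * (Real.exp (∑ i ∈ range N, a i - ∑ i ∈ range n, a i) * d N + ε)
          + a n * ε := by gcongr; exacts [(ha n).1, hb n hn]
      _ = (1 - a n) * Real.exp (∑ i ∈ range N, a i - ∑ i ∈ range n, a i) * d N + ε := by ring
      _ ≤ Real.exp (-a n) * Real.exp (∑ i ∈ range N, a i - ∑ i ∈ range n, a i) * d N + ε := by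
          gcongr
      _ = Real.exp (∑ i ∈ range N, a i - ∑ i ∈ range (n + 1), a i) * d N + ε := by
          rw [← Real.exp_add, sum_range_succ]; ring_nf

lemma tendsto_zero_of_le_one_sub_mul_add_mul (ha : ∀ n, a n ∈ Set.Icc (0 : ℝ) 1)
    (hsum : Tendsto (fun N => ∑ n ∈ range N, a n) atTop atTop)
    (hb : Tendsto b atTop (𝓝 0)) (hd : ∀ n, 0 ≤ d n)
    (hrec : ∀ n, d (n + 1) ≤ (1 - a n) * d n + a n * b n) :
    Tendsto d atTop (𝓝 0) := by
  refine tendsto_order.2 ⟨fun c hc => Eventually.of_forall fun n => hc.trans_le (hd n),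
    fun ε hε => ?_⟩
  obtain ⟨N, hN⟩ := eventually_atTop.1 (hb.eventually (ge_mem_nhds (half_pos hε)))
  have hexp : Tendsto (fun n => Real.exp (∑ i ∈ range N, a i - ∑ i ∈ range n, a i) * d N)
      atTop (𝓝 0) := by
    simpa [sub_eq_add_neg] using (Real.tendsto_exp_atBot.comp (tendsto_atBot_add_const_left _
      (∑ i ∈ range N, a i) (tendsto_neg_atTop_atBot.comp hsum))).mul_const (d N)
  filter_upwards [eventually_ge_atTop N, hexp.eventually (gt_mem_nhds (half_pos hε))]
    with n hn hq
  linarith [le_exp_sum_sub_sum_mul_add_of_le_one_sub_mul_add_mul ha (hd N) (half_pos hε).le hN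
    hrec n hn]

end Recursion

lemma convex_fixedPoints_of_nonexpansive {E : Type*} [NormedAddCommGroup E] [NormedSpace ℝ E]
    [StrictConvexSpace ℝ E] {S : E → E} (hS : ∀ x y, ‖S x - S y‖ ≤ ‖x - y‖) :
    Convex ℝ (Function.fixedPoints S) := by
  refine convex_iff_segment_subset.2 fun x hx y hy => ?_
  rw [segment_eq_image_lineMap]
  rintro _ ⟨t, ⟨ht0, ht1⟩, rfl⟩
  set m := AffineMap.lineMap x y t
  have hxm : dist x (S m) ≤ t * dist x y := by
    calc dist x (S m) = dist (S x) (S m) := by rw [hx.eq]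
      _ ≤ dist x m := by simpa [dist_eq_norm] using hS x m
      _ = t * dist x y := by rw [dist_left_lineMap, Real.norm_of_nonneg ht0]
  have hmy : dist (S m) y ≤ (1 - t) * dist x y := by
    calc dist (S m) y = dist (S m) (S y) := by rw [hy.eq]
      _ ≤ dist m y := by simpa [dist_eq_norm] using hS m y
      _ = (1 - t) * dist x y := by
          rw [dist_lineMap_right, Real.norm_of_nonneg (sub_nonneg.2 ht1)]
  have htri := dist_triangle x (S m) y
  exact eq_lineMap_of_dist_eq_mul_of_dist_eq_mul (by linarith) (by linarith)

section Hilbert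

variable {H : Type*} [NormedAddCommGroup H] [InnerProductSpace ℝ H]

lemma real_inner_sub_sub_nonpos_of_forall_norm_sub_le {K : Set H} (hK : Convex ℝ K) {u p : H}
    (hp : p ∈ K) (hmin : ∀ w ∈ K, ‖u - p‖ ≤ ‖u - w‖) : ∀ w ∈ K, ⟪u - p, w - p⟫ ≤ 0 := by
  have : Nonempty K := ⟨⟨p, hp⟩⟩
  refine (norm_eq_iInf_iff_real_inner_le_zero hK hp).1 (le_antisymm
    (le_ciInf fun w => hmin w w.2) (ciInf_le ⟨0, ?_⟩ (⟨p, hp⟩ : K)))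
  rintro _ ⟨w, rfl⟩
  exact norm_nonneg _

lemma lipschitzWith_one_of_real_inner_sub_sub_nonpos {K : Set H} {P : H → H}
    (hPK : ∀ u, P u ∈ K) (hP : ∀ u, ∀ w ∈ K, ⟪u - P u, w - P u⟫ ≤ 0) : LipschitzWith 1 P := by
  refine LipschitzWith.of_dist_le_mul fun a b => ?_
  rw [NNReal.coe_one, one_mul, dist_eq_norm, dist_eq_norm]
  have hab := hP a (P b) (hPK b)
  have hba := hP b (P a) (hPK a)
  have hfirm : ‖P a - P b‖ ^ 2 ≤ ⟪a - b, P a - P b⟫ := by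
    have : ⟪a - b, P a - P b⟫ - ‖P a - P b‖ ^ 2
        = -⟪a - P a, P b - P a⟫ - ⟪b - P b, P a - P b⟫ := by
      rw [← real_inner_self_eq_norm_sq]
      simp only [inner_sub_left, inner_sub_right]
      ring
    linarith
  nlinarith [real_inner_le_norm (a - b) (P a - P b), norm_nonneg (P a - P b),
    norm_nonneg (a - b)]

lemma exists_lipschitzWith_sub_lt_one {A : H → H} {κ η : ℝ} (hκη : η ^ 2 < 2 * κ)
    (hmono : ∀ x y : H, κ * ‖x - y‖ ^ 2 ≤ ⟪x - y, A x - A y⟫)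
    (hlip : ∀ x y : H, ‖A x - A y‖ ≤ η * ‖x - y‖) :
    ∃ K : ℝ≥0, K < 1 ∧ LipschitzWith K fun x => x - A x := by
  refine ⟨(√(1 - 2 * κ + η ^ 2)).toNNReal, ?_, LipschitzWith.of_dist_le_mul fun a b => ?_⟩
  · rw [Real.toNNReal_lt_one, Real.sqrt_lt' one_pos]
    linarith
  rw [dist_eq_norm, dist_eq_norm, Real.coe_toNNReal _ (Real.sqrt_nonneg _)]
  have hA : ‖A a - A b‖ ^ 2 ≤ η ^ 2 * ‖a - b‖ ^ 2 := by
    rw [← mul_pow]; exact pow_le_pow_left₀ (norm_nonneg _) (hlip a b) 2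
  have hsq : ‖(a - A a) - (b - A b)‖ ^ 2 ≤ (1 - 2 * κ + η ^ 2) * ‖a - b‖ ^ 2 := by
    rw [show (a - A a) - (b - A b) = (a - b) - (A a - A b) by abel, norm_sub_sq_real]
    linarith [hmono a b]
  calc ‖(a - A a) - (b - A b)‖ = √(‖(a - A a) - (b - A b)‖ ^ 2) :=
        (Real.sqrt_sq (norm_nonneg _)).symm
    _ ≤ √((1 - 2 * κ + η ^ 2) * ‖a - b‖ ^ 2) := Real.sqrt_le_sqrt hsq
    _ = √(1 - 2 * κ + η ^ 2) * ‖a - b‖ := by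
        rw [Real.sqrt_mul' _ (sq_nonneg _), Real.sqrt_sq (norm_nonneg _)]

lemma eq_of_real_inner_sub_nonneg_of_strongly_monotone {A : H → H} {κ : ℝ} (hκ : 0 < κ)
    (hmono : ∀ x y : H, κ * ‖x - y‖ ^ 2 ≤ ⟪x - y, A x - A y⟫) {z z' : H}
    (h : 0 ≤ ⟪z' - z, A z⟫) (h' : 0 ≤ ⟪z - z', A z'⟫) : z' = z := by
  have hle : κ * ‖z' - z‖ ^ 2 ≤ 0 := by
    have : ⟪z' - z, A z' - A z⟫ = -⟪z - z', A z'⟫ - ⟪z' - z, A z⟫ := by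
      rw [inner_sub_right, ← neg_sub z z', inner_neg_left]
    linarith [hmono z' z]
  by_contra hne
  have : 0 < κ * ‖z' - z‖ ^ 2 := by
    have := norm_pos_iff.2 (sub_ne_zero.2 hne); positivity
  linarith

end Hilbert

section SteepestDescent

variable {E : Type*} [NormedAddCommGroup E] [NormedSpace ℝ E] {A : E → E} {K : ℝ≥0} {z : E}

lemma norm_hsdm_step_sub_halpern_step_le {S : E → E} (hS : ∀ x y, ‖S x - S y‖ ≤ ‖x - y‖)
    (hSz : S z = z) (hG : LipschitzWith K fun x => x - A x) {t : ℝ} (ht : t ∈ Set.Icc (0 : ℝ) 1)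
    (x y : E) :
    ‖(S y - t • A (S y)) - (t • (z - A z) + (1 - t) • S x)‖
      ≤ t * K * ‖y - z‖ + (1 - t) * ‖y - x‖ := by
  have h1t : 0 ≤ 1 - t := sub_nonneg.2 ht.2
  have hSyz : ‖S y - z‖ ≤ ‖y - z‖ := by simpa [hSz] using hS y z
  calc ‖(S y - t • A (S y)) - (t • (z - A z) + (1 - t) • S x)‖
        = ‖t • ((S y - A (S y)) - (z - A z)) + (1 - t) • (S y - S x)‖ := by congr 1; module
    _ ≤ t * ‖(S y - A (S y)) - (z - A z)‖ + (1 - t) * ‖S y - S x‖ := by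
        refine (norm_add_le _ _).trans_eq ?_
        rw [norm_smul, norm_smul, Real.norm_of_nonneg ht.1, Real.norm_of_nonneg h1t]
    _ ≤ t * (K * ‖S y - z‖) + (1 - t) * ‖y - x‖ :=
        add_le_add (mul_le_mul_of_nonneg_left (hG.norm_sub_le (S y) z) ht.1)
          (mul_le_mul_of_nonneg_left (hS y x) h1t)
    _ ≤ t * K * ‖y - z‖ + (1 - t) * ‖y - x‖ := by
        rw [← mul_assoc]; gcongr; exact mul_nonneg ht.1 K.2

lemma tendsto_hsdm_of_tendsto_halpern (hK : K < 1) (hG : LipschitzWith K fun x => x - A x)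
    {T : ℕ → E → E} (hT : ∀ n, ∀ x y : E, ‖T n x - T n y‖ ≤ ‖x - y‖) (hTz : ∀ n, T n z = z)
    {l : ℕ → ℝ} (hl : ∀ n, l n ∈ Set.Icc (0 : ℝ) 1)
    (hldiv : Tendsto (fun N => ∑ n ∈ range N, l n) atTop atTop) {x y : ℕ → E}
    (hx : ∀ n, x (n + 1) = l n • (z - A z) + (1 - l n) • T n (x n))
    (hy : ∀ n, y (n + 1) = T n (y n) - l n • A (T n (y n)))
    (hxz : Tendsto x atTop (𝓝 z)) : Tendsto y atTop (𝓝 z) := by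
  have he : Tendsto (fun n => ‖x n - z‖) atTop (𝓝 0) := tendsto_iff_norm_sub_tendsto_zero.1 hxz
  have hK' : 0 < 1 - (K : ℝ) := sub_pos.2 (by exact_mod_cast hK)
  have hrec : ∀ n, ‖y (n + 1) - x (n + 1)‖ ≤ (1 - l n * (1 - K)) * ‖y n - x n‖
      + l n * (1 - K) * (K / (1 - K) * ‖x n - z‖) := by
    intro n
    have hstep := norm_hsdm_step_sub_halpern_step_le (hT n) (hTz n) hG (hl n) (x n) (y n)
    rw [← hy n, ← hx n] at hstep
    have hlK : 0 ≤ l n * K := mul_nonneg (hl n).1 K.2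
    calc ‖y (n + 1) - x (n + 1)‖ ≤ l n * K * ‖y n - z‖ + (1 - l n) * ‖y n - x n‖ := hstep
      _ ≤ l n * K * (‖y n - x n‖ + ‖x n - z‖) + (1 - l n) * ‖y n - x n‖ := by
          gcongr; exact norm_sub_le_norm_sub_add_norm_sub _ _ _
      _ = _ := by field_simp; ring
  have hd : Tendsto (fun n => ‖y n - x n‖) atTop (𝓝 0) :=
    tendsto_zero_of_le_one_sub_mul_add_mul
      (fun n => ⟨mul_nonneg (hl n).1 hK'.le, mul_le_one₀ (hl n).2 hK'.le (by simp)⟩)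
      (by simpa [sum_mul] using hldiv.atTop_mul_const hK')
      (by simpa using he.const_mul ((K : ℝ) / (1 - K))) (fun n => norm_nonneg _) hrec
  exact tendsto_iff_norm_sub_tendsto_zero.2 <| squeeze_zero (fun n => norm_nonneg _)
    (fun n => norm_sub_le_norm_sub_add_norm_sub (y n) (x n) z) (by simpa using hd.add he)

end SteepestDescent

theorem halpern_to_hsdm_general
    {H : Type*} [NormedAddCommGroup H] [InnerProductSpace ℝ H] [CompleteSpace H]
    (T : ℕ → H → H) (hT : ∀ n, ∀ x y : H, ‖T n x - T n y‖ ≤ ‖x - y‖)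
    (F : Set H) (hF : F = {z : H | ∀ n, T n z = z})
    (A : H → H) (κ η : ℝ) (hκη : η ^ 2 < 2 * κ)
    (hmono : ∀ x y : H, κ * ‖x - y‖ ^ 2 ≤ ⟪x - y, A x - A y⟫)
    (hlip : ∀ x y : H, ‖A x - A y‖ ≤ η * ‖x - y‖)
    (l : ℕ → ℝ) (hl : ∀ n, l n ∈ Set.Icc (0 : ℝ) 1)
    (hldiv : Tendsto (fun N => ∑ n ∈ Finset.range N, l n) atTop atTop)
    (P : H → H) (hP : ∀ x : H, P x ∈ F ∧ ∀ w ∈ F, ‖x - P x‖ ≤ ‖x - w‖)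
    (hHalpern : ∀ u : H, ∀ x : ℕ → H,
      (∀ n, x (n + 1) = l n • u + (1 - l n) • T n (x n)) →
      Tendsto x atTop (𝓝 (P u)))
    (y : ℕ → H)
    (hy : ∀ n, y (n + 1) = T n (y n) - l n • A (T n (y n))) :
    ∃ z : H, (z ∈ F ∧ ∀ w ∈ F, 0 ≤ ⟪w - z, A z⟫) ∧
      (∀ z' : H, z' ∈ F → (∀ w ∈ F, 0 ≤ ⟪w - z', A z'⟫) → z' = z) ∧
      Tendsto y atTop (𝓝 z) := by
  have hFconv : Convex ℝ F := by
    rw [hF, Set.ofPred_forall]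
    exact convex_iInter fun n => convex_fixedPoints_of_nonexpansive (hT n)
  have hproj (u : H) : ∀ w ∈ F, ⟪u - P u, w - P u⟫ ≤ 0 :=
    real_inner_sub_sub_nonpos_of_forall_norm_sub_le hFconv (hP u).1 (hP u).2
  obtain ⟨K, hK, hG⟩ := exists_lipschitzWith_sub_lt_one hκη hmono hlip
  have hcontr : ContractingWith K (P ∘ fun x => x - A x) :=
    ⟨hK, by simpa using (lipschitzWith_one_of_real_inner_sub_sub_nonpos (fun u => (hP u).1)
      hproj).comp hG⟩
  set z := ContractingWith.fixedPoint _ hcontr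
  have hPz : P (z - A z) = z := hcontr.fixedPoint_isFixedPt
  have hzF : z ∈ F := hPz ▸ (hP _).1
  have hVI : ∀ w ∈ F, 0 ≤ ⟪w - z, A z⟫ := fun w hw => by
    have := hproj (z - A z) w hw
    rw [hPz, sub_sub_cancel_left, inner_neg_left, real_inner_comm] at this
    linarith
  refine ⟨z, ⟨hzF, hVI⟩, fun z' hz' hVI' => ?_, ?_⟩
  · exact eq_of_real_inner_sub_nonneg_of_strongly_monotone (by linarith [sq_nonneg η]) hmono
      (hVI z' hz') (hVI' z hzF)
  · let x : ℕ → H := fun n => Nat.rec (y 0) (fun k xk => l k • (z - A z) + (1 - l k) • T k xk) n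
    have hx := hHalpern (z - A z) x fun n => rfl
    rw [hPz] at hx
    have hTz : ∀ n, T n z = z := by rw [hF] at hzF; exact hzF
    exact tendsto_hsdm_of_tendsto_halpern hK hG hT hTz hl hldiv (fun n => rfl) hy hx

/-- If every Halpern type iterative sequence `x_{n+1} = λ_n u + (1 - λ_n) T_n x_n`
converges strongly to `P_F u` (where `P_F` is the metric projection onto the set `F`
of common fixed points of the nonexpansive mappings `T_n`), then every sequence
generated by the hybrid steepest descent method `y_{n+1} = (I - λ_n A) T_n y_n`
converges strongly to the unique solution of the variational inequality over `F`
for `A`. -/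
theorem halpern_to_hsdm
    {H : Type*} [NormedAddCommGroup H] [InnerProductSpace ℝ H] [CompleteSpace H]
    (T : ℕ → H → H) (hT : ∀ n, ∀ x y : H, ‖T n x - T n y‖ ≤ ‖x - y‖)
    (F : Set H) (hF : F = {z : H | ∀ n, T n z = z})
    (hFne : F.Nonempty)
    (A : H → H) (κ η : ℝ) (hκ : 0 < κ) (hη : 0 < η) (hκη : η ^ 2 < 2 * κ)
    (hmono : ∀ x y : H, κ * ‖x - y‖ ^ 2 ≤ ⟪x - y, A x - A y⟫)
    (hlip : ∀ x y : H, ‖A x - A y‖ ≤ η * ‖x - y‖)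
    (l : ℕ → ℝ) (hl : ∀ n, l n ∈ Set.Icc (0 : ℝ) 1)
    (hldiv : Tendsto (fun N => ∑ n ∈ Finset.range N, l n) atTop atTop)
    (P : H → H) (hP : ∀ x : H, P x ∈ F ∧ ∀ w ∈ F, ‖x - P x‖ ≤ ‖x - w‖)
    (hHalpern : ∀ u : H, ∀ x : ℕ → H,
      (∀ n, x (n + 1) = l n • u + (1 - l n) • T n (x n)) →
      Tendsto x atTop (𝓝 (P u)))
    (y : ℕ → H)
    (hy : ∀ n, y (n + 1) = T n (y n) - l n • A (T n (y n))) :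
    ∃ z : H, (z ∈ F ∧ ∀ w ∈ F, 0 ≤ ⟪w - z, A z⟫) ∧
      (∀ z' : H, z' ∈ F → (∀ w ∈ F, 0 ≤ ⟪w - z', A z'⟫) → z' = z) ∧
      Tendsto y atTop (𝓝 z) :=
  halpern_to_hsdm_general T hT F hF A κ η hκη hmono hlip l hl hldiv P hP hHalpern y hy
end

section
/- Let H be a real Hilbert space, {T_n} a sequence of nonexpansive self-mappings of H with a common fixed point, F the set of common fixed points of {T_n}, and A : H → H a κ-strongly monotone and η-lipschitzian mapping with κ, η > 0 and η² < 2κ. Let {λ_n} be a sequence in [0,1] such that λ_n → 0, ∑_{n=1}^∞ λ_n = ∞, and ∑_{n=1}^∞ |λ_{n+1} − λ_n| < ∞. Suppose that {T_n} satisfies the condition (Z) and that ∑_{n=1}^∞ sup{‖T_{n+1} y − T_n y‖ : y ∈ D} < ∞ for every nonempty bounded subset D of H. Let y ∈ H and define {y_n} by y_1 = y and y_{n+1} = (I − λ_n A) T_n y_n for n ∈ ℕ. Then {y_n} converges strongly to the unique point z ∈ F satisfying ⟨w − z, Az⟩ ≥ 0 for all w ∈ F. -/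
/-
For `t ∈ [0, 1]` the map `I - tA` is a `(1 - tc)`-contraction with `c = min (2κ - η², 1) / 2`.
Hence `P_F ∘ (I - A)` is a contraction (`P_F` the metric projection onto the closed convex set
`F`), and its fixed point is the unique solution `z` of the variational inequality; the iterates
stay within `max (‖y₀ - z‖, ‖Az‖ / c)` of `z`.

Xu's lemma on recursions `aₙ₊₁ ≤ (1 - αₙ) aₙ + αₙ βₙ + γₙ` (with `∑ αₙ = ∞`, `limsup βₙ ≤ 0`,
`∑ γₙ < ∞`) is applied twice. First to `‖yₙ₊₁ - yₙ‖`, with the summable perturbation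
`sup_D ‖Tₙ₊₁ - Tₙ‖ + ‖A Tₙ yₙ‖ |λₙ₊₁ - λₙ|`: so `yₙ - Tₙ yₙ → 0`, and condition (Z) together
with weak sequential compactness gives `liminf ⟨yₙ - z, Az⟩ ≥ 0`. Then to `‖yₙ - z‖²`, with
`βₙ = -(2 / c) ⟨yₙ₊₁ - z, Az⟩`, which gives `yₙ → z`.
-/

open RealInnerProductSpace Filter Topology Bornology Set Function NNReal

section RealSequences

open Finset

theorem le_max_of_le_one_sub_mul_add {a α : ℕ → ℝ} {K : ℝ} (hα : ∀ n, α n ∈ Icc (0 : ℝ) 1)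
    (h : ∀ n, a (n + 1) ≤ (1 - α n) * a n + α n * K) (n : ℕ) : a n ≤ max (a 0) K := by
  induction n with
  | zero => exact le_max_left _ _
  | succ n ih =>
    obtain ⟨h0, h1⟩ := hα n
    calc a (n + 1) ≤ (1 - α n) * a n + α n * K := h n
      _ ≤ (1 - α n) * max (a 0) K + α n * max (a 0) K :=
          add_le_add (mul_le_mul_of_nonneg_left ih (by linarith))
            (mul_le_mul_of_nonneg_left (le_max_right _ _) h0)
      _ = max (a 0) K := by ring

theorem tendsto_sum_range_succ_atTop {f : ℕ → ℝ}
    (hf : Tendsto (fun n => ∑ k ∈ range n, f k) atTop atTop) :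
    Tendsto (fun n => ∑ k ∈ range n, f (k + 1)) atTop atTop := by
  have h := tendsto_atTop_add_const_right _ (-f 0) (hf.comp (tendsto_add_atTop_nat 1))
  refine h.congr fun n => ?_
  simp [sum_range_succ']

theorem tendsto_sum_range_mul_atTop {f : ℕ → ℝ} {c : ℝ}
    (hf : Tendsto (fun n => ∑ k ∈ range n, f k) atTop atTop) (hc : 0 < c) :
    Tendsto (fun n => ∑ k ∈ range n, f k * c) atTop atTop := by
  simpa only [← sum_mul] using hf.atTop_mul_const hc

theorem tendsto_prod_Ico_one_sub {α : ℕ → ℝ} (hα : ∀ n, α n ∈ Icc (0 : ℝ) 1)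
    (hα_sum : Tendsto (fun n => ∑ k ∈ range n, α k) atTop atTop) (N : ℕ) :
    Tendsto (fun n => ∏ k ∈ Ico N n, (1 - α k)) atTop (𝓝 0) := by
  have hsum : Tendsto (fun n => ∑ k ∈ Ico N n, α k) atTop atTop := by
    refine (tendsto_atTop_add_const_right _ (-∑ k ∈ range N, α k) hα_sum).congr' ?_
    filter_upwards [eventually_ge_atTop N] with n hn
    rw [← sum_range_add_sum_Ico _ hn]
    ring
  refine squeeze_zero (fun n => prod_nonneg fun k _ => sub_nonneg.2 (hα k).2) (fun n => ?_)
    (Real.tendsto_exp_atBot.comp (tendsto_neg_atTop_atBot.comp hsum))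
  calc ∏ k ∈ Ico N n, (1 - α k) ≤ ∏ k ∈ Ico N n, Real.exp (-α k) :=
        prod_le_prod (fun k _ => sub_nonneg.2 (hα k).2) fun k _ => Real.one_sub_le_exp_neg _
    _ = Real.exp (-∑ k ∈ Ico N n, α k) := by rw [← Real.exp_sum, sum_neg_distrib]

theorem le_prod_mul_add_sum_of_le_one_sub_mul_add {u α γ : ℕ → ℝ} {N : ℕ}
    (hα : ∀ n, α n ∈ Icc (0 : ℝ) 1) (hγ : ∀ n, 0 ≤ γ n)
    (h : ∀ n ≥ N, u (n + 1) ≤ (1 - α n) * u n + γ n) {n : ℕ} (hn : N ≤ n) :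
    u n ≤ (∏ k ∈ Ico N n, (1 - α k)) * max (u N) 0 + ∑ k ∈ Ico N n, γ k := by
  induction n, hn using Nat.le_induction with
  | base => simp
  | succ n hn ih =>
    obtain ⟨h0, h1⟩ := hα n
    have hS : 0 ≤ ∑ k ∈ Ico N n, γ k := sum_nonneg fun k _ => hγ k
    have hP : 0 ≤ (∏ k ∈ Ico N n, (1 - α k)) * max (u N) 0 :=
      mul_nonneg (prod_nonneg fun k _ => sub_nonneg.2 (hα k).2) (le_max_right _ _)
    rw [prod_Ico_succ_top hn, sum_Ico_succ_top hn]
    calc u (n + 1) ≤ (1 - α n) * u n + γ n := h n hn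
      _ ≤ (1 - α n) * ((∏ k ∈ Ico N n, (1 - α k)) * max (u N) 0 + ∑ k ∈ Ico N n, γ k)
          + γ n := by gcongr
      _ ≤ _ := by nlinarith

theorem tendsto_zero_of_le_one_sub_mul_add {a α β γ : ℕ → ℝ} (ha : ∀ n, 0 ≤ a n)
    (hα : ∀ n, α n ∈ Icc (0 : ℝ) 1)
    (hα_sum : Tendsto (fun n => ∑ k ∈ range n, α k) atTop atTop)
    (hβ : ∀ ε > 0, ∀ᶠ n in atTop, β n ≤ ε) (hγ0 : ∀ n, 0 ≤ γ n) (hγ : Summable γ)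
    (h : ∀ n, a (n + 1) ≤ (1 - α n) * a n + α n * β n + γ n) :
    Tendsto a atTop (𝓝 0) := by
  refine tendsto_order.2 ⟨fun b hb => Eventually.of_forall fun n => hb.trans_le (ha n),
    fun b hb => ?_⟩
  set ε := b / 3 with hεb
  -- beyond `N`, the sequence `a n - ε` obeys the same recursion without the `β` term
  have hε : 0 < ε := by positivity
  have htail : ∀ᶠ N in atTop, ∑' k, γ k - ∑ k ∈ range N, γ k ≤ ε :=
    (tendsto_sub_nhds_zero_iff.2 hγ.hasSum.tendsto_sum_nat).neg.eventually
      (ge_mem_nhds (by simpa using hε)) |>.mono fun N hN => by linarith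
  obtain ⟨N, hN⟩ := eventually_atTop.1 ((hβ ε hε).and htail)
  have hu : ∀ n ≥ N, a (n + 1) - ε ≤ (1 - α n) * (a n - ε) + γ n := fun n hn => by
    have := mul_le_mul_of_nonneg_left (hN n hn).1 (hα n).1
    linarith [h n]
  have hP := ((tendsto_prod_Ico_one_sub hα hα_sum N).mul_const (max (a N - ε) 0)).eventually
    (gt_mem_nhds (by simpa using hε))
  filter_upwards [hP, eventually_ge_atTop N] with n hPn hn
  have hbound := le_prod_mul_add_sum_of_le_one_sub_mul_add (u := fun n => a n - ε) hα hγ0 hu hn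
  have hS : ∑ k ∈ Ico N n, γ k ≤ ε := by
    linarith [sum_range_add_sum_Ico γ hn, hγ.sum_le_tsum (range n) (fun k _ => hγ0 k),
      (hN N le_rfl).2]
  linarith

end RealSequences

theorem norm_sub_le_biSup {X E : Type*} [PseudoMetricSpace X] [SeminormedAddCommGroup E]
    {f g : X → E} {Kf Kg : ℝ≥0} (hf : LipschitzWith Kf f) (hg : LipschitzWith Kg g)
    {D : Set X} (hD : IsBounded D) {x : X} (hx : x ∈ D) :
    ‖f x - g x‖ ≤ ⨆ y ∈ D, ‖f y - g y‖ := by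
  obtain ⟨R, hR⟩ := ((hf.sub hg).isBounded_image hD).exists_norm_le
  refine le_ciSup₂ (f := fun y (_ : y ∈ D) => ‖f y - g y‖) ⟨R, ?_⟩ x hx
  simp only [mem_upperBounds, mem_iUnion, mem_range]
  rintro _ ⟨y, hy, rfl⟩
  exact hR _ (mem_image_of_mem _ hy)

theorem convex_fixedPoints_of_lipschitzWith_one {E : Type*} [NormedAddCommGroup E]
    [NormedSpace ℝ E] [StrictConvexSpace ℝ E] {T : E → E} (hT : LipschitzWith 1 T) :
    Convex ℝ (fixedPoints T) := by
  refine convex_iff_forall_pos.2 fun x hx y hy a b ha hb hab => ?_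
  have hline : a • x + b • y = AffineMap.lineMap x y b := by
    rw [AffineMap.lineMap_apply_module, ← eq_sub_of_add_eq hab]
  have hT' (u v : E) : dist (T u) (T v) ≤ dist u v := by
    simpa using hT.dist_le_mul u v
  have hx' := hT' x (AffineMap.lineMap x y b)
  have hy' := hT' (AffineMap.lineMap x y b) y
  rw [hx.eq, dist_left_lineMap, Real.norm_of_nonneg hb.le] at hx'
  rw [hy.eq, dist_lineMap_right, Real.norm_of_nonneg (by linarith)] at hy'
  have htri := dist_triangle x (T (AffineMap.lineMap x y b)) y
  rw [mem_fixedPoints, hline]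
  exact eq_lineMap_of_dist_eq_mul_of_dist_eq_mul (by linarith) (by linarith)

section InnerProductSpace

variable {H : Type*} [NormedAddCommGroup H] [InnerProductSpace ℝ H]

theorem norm_sub_sq_le (u v : H) : ‖u - v‖ ^ 2 ≤ ‖u‖ ^ 2 - 2 * ⟪u - v, v⟫ := by
  rw [norm_sub_sq_real, inner_sub_left, real_inner_self_eq_norm_sq]
  nlinarith [sq_nonneg ‖v‖]

theorem norm_sub_le_of_inner_le_zero {u v p q : H} (hp : ⟪u - p, q - p⟫ ≤ 0)
    (hq : ⟪v - q, p - q⟫ ≤ 0) : ‖p - q‖ ≤ ‖u - v‖ := by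
  have key : ‖p - q‖ ^ 2 ≤ ⟪u - v, p - q⟫ := by
    have e : ⟪u - v, p - q⟫ = ‖p - q‖ ^ 2 - ⟪u - p, q - p⟫ - ⟪v - q, p - q⟫ := by
      rw [← real_inner_self_eq_norm_sq]
      simp only [inner_sub_left, inner_sub_right, real_inner_comm]
      ring
    linarith
  rcases (norm_nonneg (p - q)).eq_or_lt with h | h
  · rw [← h]; exact norm_nonneg _
  · refine le_of_mul_le_mul_right ?_ h
    nlinarith [real_inner_le_norm (u - v) (p - q)]

theorem exists_lipschitzWith_one_proj [CompleteSpace H] {K : Set H} (hne : K.Nonempty)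
    (hcl : IsClosed K) (hconv : Convex ℝ K) :
    ∃ P : H → H, LipschitzWith 1 P ∧ ∀ u p, P u = p ↔ p ∈ K ∧ ∀ w ∈ K, ⟪u - p, w - p⟫ ≤ 0 := by
  have h (u : H) : ∃ p ∈ K, ∀ w ∈ K, ⟪u - p, w - p⟫ ≤ 0 := by
    obtain ⟨p, hp, hmin⟩ := exists_norm_eq_iInf_of_complete_convex hne hcl.isComplete hconv u
    exact ⟨p, hp, (norm_eq_iInf_iff_real_inner_le_zero hconv hp).1 hmin⟩
  choose P hPK hP using h
  refine ⟨P, LipschitzWith.of_dist_le_mul fun u v => ?_, fun u p => ⟨?_, fun ⟨hp, hpu⟩ => ?_⟩⟩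
  · simpa [dist_eq_norm] using norm_sub_le_of_inner_le_zero (hP u _ (hPK v)) (hP v _ (hPK u))
  · rintro rfl; exact ⟨hPK u, hP u⟩
  · have := norm_sub_le_of_inner_le_zero (hP u p hp) (hpu _ (hPK u))
    rwa [sub_self, norm_zero, norm_le_zero_iff, sub_eq_zero] at this

theorem existsUnique_inner_nonneg_of_contractingWith [CompleteSpace H] {K : Set H}
    (hne : K.Nonempty) (hcl : IsClosed K) (hconv : Convex ℝ K) {A : H → H} {k : NNReal}
    (hA : ContractingWith k fun x => x - A x) :
    ∃! z, z ∈ K ∧ ∀ w ∈ K, 0 ≤ ⟪w - z, A z⟫ := by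
  obtain ⟨P, hP1, hP⟩ := exists_lipschitzWith_one_proj hne hcl hconv
  have hΦ : ContractingWith k fun x => P (x - A x) :=
    ⟨hA.1, by simpa [Function.comp_def] using hP1.comp hA.2⟩
  have hfix (z : H) : P (z - A z) = z ↔ z ∈ K ∧ ∀ w ∈ K, 0 ≤ ⟪w - z, A z⟫ := by
    simp only [hP, sub_sub_cancel_left, inner_neg_left, real_inner_comm (A z), neg_nonpos]
  have : Nonempty H := hne.to_subtype.map Subtype.val
  exact ⟨_, (hfix _).1 hΦ.fixedPoint_isFixedPt, fun z hz => hΦ.fixedPoint_unique ((hfix z).2 hz)⟩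

def IsWeakSubseqLimit (x : ℕ → H) (p : H) : Prop :=
  ∃ φ : ℕ → ℕ, StrictMono φ ∧ ∀ v : H, Tendsto (fun k => ⟪x (φ k) - p, v⟫) atTop (𝓝 0)

/- Sequential Banach–Alaoglu in the dual of the separable closed span `K` of the sequence, then
Riesz representation in `K`; the projection onto `K` extends the convergence to all of `H`. -/
theorem exists_isWeakSubseqLimit [CompleteSpace H] {x : ℕ → H} (hx : IsBounded (range x)) :
    ∃ p, IsWeakSubseqLimit x p := by
  set K := (Submodule.span ℝ (range x)).topologicalClosure
  have : TopologicalSpace.SeparableSpace K :=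
    ((countable_range x).isSeparable.span.closure).separableSpace
  have hxK (n : ℕ) : x n ∈ K :=
    (Submodule.span ℝ (range x)).le_topologicalClosure (Submodule.subset_span (mem_range_self n))
  obtain ⟨R, hR⟩ := hx.exists_norm_le
  let f (n : ℕ) : WeakDual ℝ K := InnerProductSpace.toDual ℝ K ⟨x n, hxK n⟩
  have hf (n : ℕ) : f n ∈ WeakDual.toStrongDual ⁻¹' Metric.closedBall 0 R :=
    mem_closedBall_zero_iff.2
      (((InnerProductSpace.toDual ℝ K).norm_map _).trans_le (hR _ (mem_range_self n)))
  obtain ⟨a, -, φ, hφ, hlim⟩ := WeakDual.isSeqCompact_closedBall ℝ K 0 R hf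
  set p : K := (InnerProductSpace.toDual ℝ K).symm (WeakDual.toStrongDual a)
  refine ⟨p, φ, hφ, fun v => ?_⟩
  set w := K.orthogonalProjectionOnto v
  have hw (k : ℕ) : ⟪x (φ k) - p, v⟫ = f (φ k) w - a w := by
    calc ⟪x (φ k) - p, v⟫ = ⟪(⟨x (φ k), hxK _⟩ - p : K), w⟫ :=
          (Submodule.inner_orthogonalProjectionOnto_eq_of_mem_left (⟨x (φ k), hxK _⟩ - p) v).symm
      _ = f (φ k) w - a w := by
          rw [inner_sub_left, InnerProductSpace.toDual_symm_apply]
          rfl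
  simpa [hw, sub_self] using
    (((WeakDual.eval_continuous w).tendsto a).comp hlim).sub_const (a w)

theorem eventually_neg_le_inner_of_isWeakSubseqLimit [CompleteSpace H] {x : ℕ → H}
    (hx : IsBounded (range x)) {z v : H} (h : ∀ p, IsWeakSubseqLimit x p → 0 ≤ ⟪p - z, v⟫) :
    ∀ ε > 0, ∀ᶠ n in atTop, -ε ≤ ⟪x n - z, v⟫ := by
  intro ε hε
  by_contra hfreq
  obtain ⟨ψ, hψ, hlt⟩ := extraction_of_frequently_atTop (not_eventually.1 hfreq)
  obtain ⟨p, σ, hσ, hp⟩ :=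
    exists_isWeakSubseqLimit (hx.subset (range_comp_subset_range ψ x))
  have hlim : Tendsto (fun k => ⟪x (ψ (σ k)) - z, v⟫) atTop (𝓝 ⟪p - z, v⟫) := by
    simpa [← inner_add_left] using (hp v).add_const ⟪p - z, v⟫
  have := le_of_tendsto hlim (Eventually.of_forall fun k => (not_le.1 (hlt (σ k))).le)
  linarith [h p ⟨ψ ∘ σ, hψ.comp hσ, hp⟩]

def IsRelaxedContraction (A : H → H) (c : ℝ) : Prop :=
  ∀ t ∈ Icc (0 : ℝ) 1, ∀ x y : H, ‖(x - t • A x) - (y - t • A y)‖ ≤ (1 - t * c) * ‖x - y‖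

theorem exists_isRelaxedContraction {A : H → H} {κ η : ℝ} (hκη : η ^ 2 < 2 * κ)
    (hmono : ∀ x y : H, κ * ‖x - y‖ ^ 2 ≤ ⟪x - y, A x - A y⟫)
    (hlip : ∀ x y : H, ‖A x - A y‖ ≤ η * ‖x - y‖) :
    ∃ c, 0 < c ∧ c ≤ 1 ∧ IsRelaxedContraction A c := by
  -- `‖(I - tA)x - (I - tA)y‖² ≤ (1 - tτ)‖x - y‖²`, and `1 - s ≤ (1 - s / 2)²`
  set τ := min (2 * κ - η ^ 2) 1
  have hτ0 : 0 < τ := lt_min (by linarith) one_pos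
  have hτ1 : τ ≤ 1 := min_le_right _ _
  refine ⟨τ / 2, by positivity, by linarith, fun t ⟨ht0, ht1⟩ x y => ?_⟩
  have hsq : ‖(x - t • A x) - (y - t • A y)‖ ^ 2 ≤ (1 - t * τ) * ‖x - y‖ ^ 2 := by
    have hA2 : ‖A x - A y‖ ^ 2 ≤ η ^ 2 * ‖x - y‖ ^ 2 := by
      rw [← mul_pow]; exact pow_le_pow_left₀ (norm_nonneg _) (hlip x y) 2
    have hexp : (x - t • A x) - (y - t • A y) = (x - y) - t • (A x - A y) := by module
    rw [hexp, norm_sub_sq_real, real_inner_smul_right, norm_smul, Real.norm_of_nonneg ht0,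
      mul_pow]
    have htt : t ^ 2 ≤ t := by nlinarith
    have hτ : τ ≤ 2 * κ - η ^ 2 := min_le_left _ _
    nlinarith [mul_le_mul_of_nonneg_left (hmono x y) ht0,
      mul_le_mul_of_nonneg_left hA2 (sq_nonneg t),
      mul_le_mul_of_nonneg_right htt (mul_nonneg (sq_nonneg η) (sq_nonneg ‖x - y‖)),
      mul_le_mul_of_nonneg_right hτ (mul_nonneg ht0 (sq_nonneg ‖x - y‖))]
  have hpos : 0 ≤ 1 - t * (τ / 2) := by nlinarith
  refine le_of_pow_le_pow_left₀ two_ne_zero (mul_nonneg hpos (norm_nonneg _)) ?_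
  calc ‖(x - t • A x) - (y - t • A y)‖ ^ 2 ≤ (1 - t * τ) * ‖x - y‖ ^ 2 := hsq
    _ ≤ ((1 - t * (τ / 2)) * ‖x - y‖) ^ 2 := by
        rw [mul_pow]; nlinarith [sq_nonneg (t * τ), sq_nonneg ‖x - y‖]

namespace IsRelaxedContraction

variable {A : H → H} {c : ℝ}

theorem norm_sub_smul_sub_le (hA : IsRelaxedContraction A c) {t : ℝ} (ht : t ∈ Icc (0 : ℝ) 1)
    (u z : H) : ‖(u - t • A u) - z‖ ≤ (1 - t * c) * ‖u - z‖ + t * ‖A z‖ :=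
  calc ‖(u - t • A u) - z‖ = ‖((u - t • A u) - (z - t • A z)) - t • A z‖ := by congr 1; abel
    _ ≤ ‖(u - t • A u) - (z - t • A z)‖ + ‖t • A z‖ := norm_sub_le _ _
    _ ≤ (1 - t * c) * ‖u - z‖ + t * ‖A z‖ := by
        rw [norm_smul, Real.norm_of_nonneg ht.1]; gcongr; exact hA t ht u z

theorem norm_apply_sub_le (hA : IsRelaxedContraction A c) (hc : 0 ≤ c) (x y : H) :
    ‖A x - A y‖ ≤ 2 * ‖x - y‖ := by
  have h := hA 1 ⟨zero_le_one, le_rfl⟩ x y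
  rw [one_smul, one_smul, one_mul] at h
  calc ‖A x - A y‖ = ‖(x - y) - ((x - A x) - (y - A y))‖ := by congr 1; abel
    _ ≤ ‖x - y‖ + ‖(x - A x) - (y - A y)‖ := norm_sub_le _ _
    _ ≤ 2 * ‖x - y‖ := by nlinarith [norm_nonneg (x - y)]

theorem contractingWith (hA : IsRelaxedContraction A c) (hc : 0 < c) :
    ContractingWith (1 - c).toNNReal fun x => x - A x :=
  ⟨Real.toNNReal_lt_one.2 (by linarith), LipschitzWith.of_dist_le' fun x y => by
    simpa [dist_eq_norm] using hA 1 ⟨zero_le_one, le_rfl⟩ x y⟩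

end IsRelaxedContraction

namespace HybridSteepestDescent

variable {T : ℕ → H → H} {A : H → H} {c : ℝ} {l : ℕ → ℝ} {y : ℕ → H} {z : H}

theorem norm_sub_le_max (hT : ∀ n, ∀ x y : H, ‖T n x - T n y‖ ≤ ‖x - y‖)
    (hA : IsRelaxedContraction A c) (hc0 : 0 < c) (hc1 : c ≤ 1)
    (hl : ∀ n, l n ∈ Icc (0 : ℝ) 1) (hy : ∀ n, y (n + 1) = T n (y n) - l n • A (T n (y n)))
    (hz : ∀ n, T n z = z) (n : ℕ) : ‖y n - z‖ ≤ max ‖y 0 - z‖ (‖A z‖ / c) := by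
  have hα (n : ℕ) : l n * c ∈ Icc (0 : ℝ) 1 := unitInterval.mul_mem (hl n) ⟨hc0.le, hc1⟩
  refine le_max_of_le_one_sub_mul_add (a := fun n => ‖y n - z‖) hα (fun n => ?_) n
  have hTz : ‖T n (y n) - z‖ ≤ ‖y n - z‖ := by simpa only [hz n] using hT n (y n) z
  have hpos : 0 ≤ 1 - l n * c := sub_nonneg.2 (hα n).2
  calc ‖y (n + 1) - z‖ ≤ (1 - l n * c) * ‖T n (y n) - z‖ + l n * ‖A z‖ :=
        hy n ▸ hA.norm_sub_smul_sub_le (hl n) _ _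
    _ ≤ (1 - l n * c) * ‖y n - z‖ + l n * c * (‖A z‖ / c) := by
        rw [mul_assoc, mul_div_cancel₀ _ hc0.ne']; gcongr

theorem isBounded_range (hT : ∀ n, ∀ x y : H, ‖T n x - T n y‖ ≤ ‖x - y‖)
    (hA : IsRelaxedContraction A c) (hc0 : 0 < c) (hc1 : c ≤ 1)
    (hl : ∀ n, l n ∈ Icc (0 : ℝ) 1) (hy : ∀ n, y (n + 1) = T n (y n) - l n • A (T n (y n)))
    (hz : ∀ n, T n z = z) : IsBounded (range y) :=
  (Metric.isBounded_closedBall (x := z)).subset <| range_subset_iff.2 fun n =>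
    mem_closedBall_iff_norm.2 (norm_sub_le_max hT hA hc0 hc1 hl hy hz n)

theorem exists_norm_apply_le (hT : ∀ n, ∀ x y : H, ‖T n x - T n y‖ ≤ ‖x - y‖)
    (hA : IsRelaxedContraction A c) (hc0 : 0 < c) (hc1 : c ≤ 1)
    (hl : ∀ n, l n ∈ Icc (0 : ℝ) 1) (hy : ∀ n, y (n + 1) = T n (y n) - l n • A (T n (y n)))
    (hz : ∀ n, T n z = z) : ∃ R, ∀ n, ‖A (T n (y n))‖ ≤ R := by
  refine ⟨‖A z‖ + 2 * max ‖y 0 - z‖ (‖A z‖ / c), fun n => ?_⟩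
  have hTz : ‖T n (y n) - z‖ ≤ ‖y n - z‖ := by simpa only [hz n] using hT n (y n) z
  calc ‖A (T n (y n))‖ ≤ ‖A z‖ + ‖A (T n (y n)) - A z‖ := norm_le_norm_add_norm_sub' _ _
    _ ≤ ‖A z‖ + 2 * ‖T n (y n) - z‖ := by gcongr; exact hA.norm_apply_sub_le hc0.le _ _
    _ ≤ ‖A z‖ + 2 * max ‖y 0 - z‖ (‖A z‖ / c) := by
        gcongr; exact hTz.trans (norm_sub_le_max hT hA hc0 hc1 hl hy hz n)

theorem norm_succ_succ_sub_le (hT : ∀ n, ∀ x y : H, ‖T n x - T n y‖ ≤ ‖x - y‖)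
    (hA : IsRelaxedContraction A c) (hc0 : 0 < c) (hc1 : c ≤ 1)
    (hl : ∀ n, l n ∈ Icc (0 : ℝ) 1) (hy : ∀ n, y (n + 1) = T n (y n) - l n • A (T n (y n)))
    (n : ℕ) :
    ‖y (n + 2) - y (n + 1)‖ ≤ (1 - l (n + 1) * c) * ‖y (n + 1) - y n‖ +
      (‖T (n + 1) (y n) - T n (y n)‖ + ‖A (T n (y n))‖ * |l (n + 1) - l n|) := by
  have hpos : 0 ≤ 1 - l (n + 1) * c := sub_nonneg.2 (unitInterval.mul_mem (hl _) ⟨hc0.le, hc1⟩).2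
  have e : y (n + 2) - y (n + 1) =
      ((T (n + 1) (y (n + 1)) - l (n + 1) • A (T (n + 1) (y (n + 1)))) -
        (T n (y n) - l (n + 1) • A (T n (y n)))) + (l n - l (n + 1)) • A (T n (y n)) := by
    rw [hy (n + 1), hy n]; module
  have hT' : ‖T (n + 1) (y (n + 1)) - T n (y n)‖ ≤
      ‖y (n + 1) - y n‖ + ‖T (n + 1) (y n) - T n (y n)‖ :=
    (norm_sub_le_norm_sub_add_norm_sub _ (T (n + 1) (y n)) _).trans (by gcongr; exact hT _ _ _)
  calc ‖y (n + 2) - y (n + 1)‖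
      ≤ (1 - l (n + 1) * c) * ‖T (n + 1) (y (n + 1)) - T n (y n)‖ +
          ‖A (T n (y n))‖ * |l (n + 1) - l n| := by
        rw [e]
        refine (norm_add_le _ _).trans (add_le_add (hA _ (hl _) _ _) ?_)
        rw [norm_smul, Real.norm_eq_abs, abs_sub_comm, mul_comm]
    _ ≤ (1 - l (n + 1) * c) * (‖y (n + 1) - y n‖ + ‖T (n + 1) (y n) - T n (y n)‖) +
          ‖A (T n (y n))‖ * |l (n + 1) - l n| := by gcongr
    _ ≤ _ := by
        have := mul_nonneg (unitInterval.mul_mem (hl (n + 1)) ⟨hc0.le, hc1⟩).1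
          (norm_nonneg (T (n + 1) (y n) - T n (y n)))
        nlinarith

theorem tendsto_norm_succ_sub (hT : ∀ n, ∀ x y : H, ‖T n x - T n y‖ ≤ ‖x - y‖)
    (hA : IsRelaxedContraction A c) (hc0 : 0 < c) (hc1 : c ≤ 1)
    (hl : ∀ n, l n ∈ Icc (0 : ℝ) 1)
    (hldiv : Tendsto (fun N => ∑ n ∈ Finset.range N, l n) atTop atTop)
    (hldiff : Summable fun n => |l (n + 1) - l n|)
    (hy : ∀ n, y (n + 1) = T n (y n) - l n • A (T n (y n))) (hbdd : IsBounded (range y))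
    {R : ℝ} (hR : ∀ n, ‖A (T n (y n))‖ ≤ R)
    (hsum : Summable fun n => ⨆ w ∈ range y, ‖T (n + 1) w - T n w‖) :
    Tendsto (fun n => ‖y (n + 1) - y n‖) atTop (𝓝 0) := by
  have hT1 (n : ℕ) : LipschitzWith 1 (T n) :=
    lipschitzWith_iff_norm_sub_le.2 fun x y => by simpa using hT n x y
  have hs (n : ℕ) : ‖T (n + 1) (y n) - T n (y n)‖ ≤ ⨆ w ∈ range y, ‖T (n + 1) w - T n w‖ :=
    norm_sub_le_biSup (hT1 _) (hT1 _) hbdd (mem_range_self n)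
  have hR0 : 0 ≤ R := (norm_nonneg _).trans (hR 0)
  refine tendsto_zero_of_le_one_sub_mul_add (β := 0) (fun n => norm_nonneg _)
    (fun n => unitInterval.mul_mem (hl (n + 1)) ⟨hc0.le, hc1⟩)
    (tendsto_sum_range_mul_atTop (tendsto_sum_range_succ_atTop hldiv) hc0)
    (fun ε hε => Eventually.of_forall fun _ => hε.le)
    (fun n => add_nonneg ((norm_nonneg _).trans (hs n)) (mul_nonneg hR0 (abs_nonneg _)))
    (hsum.add (hldiff.mul_left R)) fun n => ?_
  calc ‖y (n + 1 + 1) - y (n + 1)‖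
      ≤ (1 - l (n + 1) * c) * ‖y (n + 1) - y n‖ +
          (‖T (n + 1) (y n) - T n (y n)‖ + ‖A (T n (y n))‖ * |l (n + 1) - l n|) :=
        norm_succ_succ_sub_le hT hA hc0 hc1 hl hy n
    _ ≤ _ := by
        simp only [Pi.zero_apply, mul_zero, add_zero]
        gcongr
        exacts [hs n, hR n]

theorem tendsto_sub_apply (hl0 : Tendsto l atTop (𝓝 0))
    (hy : ∀ n, y (n + 1) = T n (y n) - l n • A (T n (y n))) {R : ℝ}
    (hR : ∀ n, ‖A (T n (y n))‖ ≤ R) (hdiff : Tendsto (fun n => ‖y (n + 1) - y n‖) atTop (𝓝 0)) :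
    Tendsto (fun n => y n - T n (y n)) atTop (𝓝 0) := by
  refine squeeze_zero_norm (fun n => ?_) (by simpa using hdiff.add (hl0.abs.mul_const R))
  calc ‖y n - T n (y n)‖ = ‖(y (n + 1) - y n) + l n • A (T n (y n))‖ := by
        rw [hy n, ← norm_neg]; congr 1; abel
    _ ≤ ‖y (n + 1) - y n‖ + |l n| * R := by
        refine (norm_add_le _ _).trans ?_
        rw [norm_smul, Real.norm_eq_abs]; gcongr; exact hR n

theorem norm_succ_sub_sq_le (hT : ∀ n, ∀ x y : H, ‖T n x - T n y‖ ≤ ‖x - y‖)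
    (hA : IsRelaxedContraction A c) (hc0 : 0 < c) (hc1 : c ≤ 1)
    (hl : ∀ n, l n ∈ Icc (0 : ℝ) 1) (hy : ∀ n, y (n + 1) = T n (y n) - l n • A (T n (y n)))
    (hz : ∀ n, T n z = z) (n : ℕ) :
    ‖y (n + 1) - z‖ ^ 2 ≤ (1 - l n * c) * ‖y n - z‖ ^ 2 - 2 * l n * ⟪y (n + 1) - z, A z⟫ := by
  set g := (T n (y n) - l n • A (T n (y n))) - (z - l n • A z) with hg_def
  have hα := unitInterval.mul_mem (hl n) ⟨hc0.le, hc1⟩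
  have hTz : ‖T n (y n) - z‖ ≤ ‖y n - z‖ := by simpa only [hz n] using hT n (y n) z
  have hg : ‖g‖ ≤ (1 - l n * c) * ‖y n - z‖ :=
    (hA _ (hl n) _ _).trans (mul_le_mul_of_nonneg_left hTz (sub_nonneg.2 hα.2))
  have hg2 : ‖g‖ ^ 2 ≤ (1 - l n * c) * ‖y n - z‖ ^ 2 := by
    have h1 := pow_le_pow_left₀ (norm_nonneg _) hg 2
    have h2 : (1 - l n * c) ^ 2 ≤ 1 - l n * c := by nlinarith [hα.1, hα.2]
    rw [mul_pow] at h1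
    linarith [mul_le_mul_of_nonneg_right h2 (sq_nonneg ‖y n - z‖)]
  have e : y (n + 1) - z = g - l n • A z := by rw [hg_def, hy n]; abel
  calc ‖y (n + 1) - z‖ ^ 2 ≤ ‖g‖ ^ 2 - 2 * ⟪y (n + 1) - z, l n • A z⟫ := by
        rw [e]; exact norm_sub_sq_le _ _
    _ ≤ _ := by rw [real_inner_smul_right]; linarith

theorem tendsto (hT : ∀ n, ∀ x y : H, ‖T n x - T n y‖ ≤ ‖x - y‖)
    (hA : IsRelaxedContraction A c) (hc0 : 0 < c) (hc1 : c ≤ 1)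
    (hl : ∀ n, l n ∈ Icc (0 : ℝ) 1)
    (hldiv : Tendsto (fun N => ∑ n ∈ Finset.range N, l n) atTop atTop)
    (hy : ∀ n, y (n + 1) = T n (y n) - l n • A (T n (y n))) (hz : ∀ n, T n z = z)
    (hinner : ∀ ε > 0, ∀ᶠ n in atTop, -ε ≤ ⟪y n - z, A z⟫) :
    Tendsto y atTop (𝓝 z) := by
  have hsq : Tendsto (fun n => ‖y n - z‖ ^ 2) atTop (𝓝 0) := by
    refine tendsto_zero_of_le_one_sub_mul_add (α := fun n => l n * c)
      (β := fun n => -2 / c * ⟪y (n + 1) - z, A z⟫) (γ := 0) (fun n => sq_nonneg _)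
      (fun n => unitInterval.mul_mem (hl n) ⟨hc0.le, hc1⟩)
      (tendsto_sum_range_mul_atTop hldiv hc0) (fun ε hε => ?_) (fun _ => le_rfl)
      summable_zero fun n => ?_
    · filter_upwards [(tendsto_add_atTop_nat 1).eventually (hinner (ε * c / 2) (by positivity))]
        with n hn
      rw [div_mul_eq_mul_div, div_le_iff₀ hc0]
      linarith
    · have : l n * c * (-2 / c * ⟪y (n + 1) - z, A z⟫) = -2 * l n * ⟪y (n + 1) - z, A z⟫ := by
        field_simp
      simp only [Pi.zero_apply, add_zero, this]
      linarith [norm_succ_sub_sq_le hT hA hc0 hc1 hl hy hz n]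
  refine tendsto_iff_norm_sub_tendsto_zero.2 ?_
  simpa [Real.sqrt_sq (norm_nonneg _)] using hsq.sqrt

end HybridSteepestDescent

end InnerProductSpace

theorem hsdm_convergence_aktt_general
    {H : Type*} [NormedAddCommGroup H] [InnerProductSpace ℝ H] [CompleteSpace H]
    (T : ℕ → H → H) (hT : ∀ n, ∀ x y : H, ‖T n x - T n y‖ ≤ ‖x - y‖)
    (F : Set H) (hF : F = {z : H | ∀ n, T n z = z})
    (hFne : F.Nonempty)
    (A : H → H) (κ η : ℝ) (hκη : η ^ 2 < 2 * κ)
    (hmono : ∀ x y : H, κ * ‖x - y‖ ^ 2 ≤ ⟪x - y, A x - A y⟫)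
    (hlip : ∀ x y : H, ‖A x - A y‖ ≤ η * ‖x - y‖)
    (l : ℕ → ℝ) (hl : ∀ n, l n ∈ Set.Icc (0 : ℝ) 1)
    (hl0 : Tendsto l atTop (𝓝 0))
    (hldiv : Tendsto (fun N => ∑ n ∈ Finset.range N, l n) atTop atTop)
    (hldiff : Summable fun n => |l (n + 1) - l n|)
    -- condition (Z): every weak cluster point of a bounded sequence `{x_n}` with
    -- `x_n - T_n x_n → 0` is a common fixed point of `{T_n}`
    (hZ : ∀ x : ℕ → H, IsBounded (Set.range x) →
      Tendsto (fun n => x n - T n (x n)) atTop (𝓝 0) →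
      ∀ p : H, (∃ φ : ℕ → ℕ, StrictMono φ ∧
        ∀ v : H, Tendsto (fun k => ⟪x (φ k) - p, v⟫) atTop (𝓝 0)) →
      p ∈ F)
    (haktt : ∀ D : Set H, D.Nonempty → IsBounded D →
      Summable fun n => ⨆ yy ∈ D, ‖T (n + 1) yy - T n yy‖)
    (y : ℕ → H)
    (hy : ∀ n, y (n + 1) = T n (y n) - l n • A (T n (y n))) :
    ∃ z : H, (z ∈ F ∧ ∀ w ∈ F, 0 ≤ ⟪w - z, A z⟫) ∧
      (∀ z' : H, z' ∈ F → (∀ w ∈ F, 0 ≤ ⟪w - z', A z'⟫) → z' = z) ∧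
      Tendsto y atTop (𝓝 z) := by
  obtain ⟨c, hc0, hc1, hA⟩ := exists_isRelaxedContraction hκη hmono hlip
  have hT1 (n : ℕ) : LipschitzWith 1 (T n) :=
    lipschitzWith_iff_norm_sub_le.2 fun x y => by simpa using hT n x y
  have hFeq : F = ⋂ n, fixedPoints (T n) := by
    ext; simp [hF, IsFixedPt]
  obtain ⟨z, ⟨hzF, hzVI⟩, huniq⟩ := existsUnique_inner_nonneg_of_contractingWith hFne
    (hFeq ▸ isClosed_iInter fun n => isClosed_fixedPoints (hT1 n).continuous)
    (hFeq ▸ convex_iInter fun n => convex_fixedPoints_of_lipschitzWith_one (hT1 n))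
    (hA.contractingWith hc0)
  refine ⟨z, ⟨hzF, hzVI⟩, fun z' hz'F hz'VI => huniq z' ⟨hz'F, hz'VI⟩, ?_⟩
  have hz : ∀ n, T n z = z := by rwa [hF] at hzF
  have hbdd := HybridSteepestDescent.isBounded_range hT hA hc0 hc1 hl hy hz
  obtain ⟨R, hR⟩ := HybridSteepestDescent.exists_norm_apply_le hT hA hc0 hc1 hl hy hz
  have hres := HybridSteepestDescent.tendsto_sub_apply hl0 hy hR <|
    HybridSteepestDescent.tendsto_norm_succ_sub hT hA hc0 hc1 hl hldiv hldiff hy hbdd hR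
      (haktt _ (range_nonempty y) hbdd)
  exact HybridSteepestDescent.tendsto hT hA hc0 hc1 hl hldiv hy hz <|
    eventually_neg_le_inner_of_isWeakSubseqLimit hbdd fun p hp => hzVI p (hZ y hbdd hres p hp)

/-- Convergence of the hybrid steepest descent method
`y_{n+1} = (I - λ_n A) T_n y_n` under the condition (Z) and the summability
condition on `{T_n}`: the sequence `{y_n}` converges strongly to the unique
solution of the variational inequality over the common fixed point set `F`. -/
theorem hsdm_convergence_aktt
    {H : Type*} [NormedAddCommGroup H] [InnerProductSpace ℝ H] [CompleteSpace H]
    (T : ℕ → H → H) (hT : ∀ n, ∀ x y : H, ‖T n x - T n y‖ ≤ ‖x - y‖)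
    (F : Set H) (hF : F = {z : H | ∀ n, T n z = z})
    (hFne : F.Nonempty)
    (A : H → H) (κ η : ℝ) (hκ : 0 < κ) (hη : 0 < η) (hκη : η ^ 2 < 2 * κ)
    (hmono : ∀ x y : H, κ * ‖x - y‖ ^ 2 ≤ ⟪x - y, A x - A y⟫)
    (hlip : ∀ x y : H, ‖A x - A y‖ ≤ η * ‖x - y‖)
    (l : ℕ → ℝ) (hl : ∀ n, l n ∈ Set.Icc (0 : ℝ) 1)
    (hl0 : Tendsto l atTop (𝓝 0))
    (hldiv : Tendsto (fun N => ∑ n ∈ Finset.range N, l n) atTop atTop)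
    (hldiff : Summable fun n => |l (n + 1) - l n|)
    -- condition (Z): every weak cluster point of a bounded sequence `{x_n}` with
    -- `x_n - T_n x_n → 0` is a common fixed point of `{T_n}`
    (hZ : ∀ x : ℕ → H, IsBounded (Set.range x) →
      Tendsto (fun n => x n - T n (x n)) atTop (𝓝 0) →
      ∀ p : H, (∃ φ : ℕ → ℕ, StrictMono φ ∧
        ∀ v : H, Tendsto (fun k => ⟪x (φ k) - p, v⟫) atTop (𝓝 0)) →
      p ∈ F)
    (haktt : ∀ D : Set H, D.Nonempty → IsBounded D →
      Summable fun n => ⨆ yy ∈ D, ‖T (n + 1) yy - T n yy‖)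
    (y : ℕ → H)
    (hy : ∀ n, y (n + 1) = T n (y n) - l n • A (T n (y n))) :
    ∃ z : H, (z ∈ F ∧ ∀ w ∈ F, 0 ≤ ⟪w - z, A z⟫) ∧
      (∀ z' : H, z' ∈ F → (∀ w ∈ F, 0 ≤ ⟪w - z', A z'⟫) → z' = z) ∧
      Tendsto y atTop (𝓝 z) :=
  hsdm_convergence_aktt_general T hT F hF hFne A κ η hκη hmono hlip l hl hl0 hldiv hldiff hZ haktt y
    hy
end

section
/- Let H be a real Hilbert space, {T_n} a sequence of nonexpansive self-mappings of H, {γ_n} a sequence in [a, b] with 0 < a ≤ b < 1, and for each n ∈ ℕ and k ∈ {1, …, n+1} define U_{n,k} : H → H by U_{n,n+1} = I and U_{n,k} = γ_k T_k U_{n,k+1} + (1 − γ_k) I. Set S_n = T_1 ∘ U_{n,2} for n ∈ ℕ. Then each S_n is nonexpansive, and if the T_k have a common fixed point, then ⋂_{n=1}^∞ Fix(S_n) = ⋂_{n=1}^∞ Fix(U_{n,1}) = ⋂_{n=1}^∞ ⋂_{k=1}^n Fix(T_k) = ⋂_{k=1}^∞ Fix(T_k), and for each n ∈ ℕ, U_{n,1}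 x = (1 − γ_1) x + γ_1 S_n x for all x ∈ H. -/
/-!
Each `U n k` is the average of the nonexpansive map `T k ∘ U n (k + 1)` with the identity, so
it is nonexpansive, and by strict convexity of the Hilbert norm it moves every point that it
does not fix strictly closer to a common fixed point `p` of the `T j`. Hence if `U n k x = x`,
then `x = T k (U n (k + 1) x)` is no farther from `p` than `U n (k + 1) x`, which forces
`U n (k + 1) x = x` and `T k x = x`; descending the recursion, `x` is fixed by every `T j`
with `k ≤ j ≤ n`. The statements about `S n = T 0 ∘ U n 1` follow since `U n 0` is its average
with the identity.
-/

section Averaging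

variable {E : Type*} [NormedAddCommGroup E] [NormedSpace ℝ E]

theorem average_eq_self_iff {γ : ℝ} (hγ : γ ≠ 0) (f : E → E) (x : E) :
    γ • f x + (1 - γ) • x = x ↔ f x = x := by
  rw [← sub_eq_zero, show γ • f x + (1 - γ) • x - x = γ • (f x - x) by module, smul_eq_zero,
    sub_eq_zero, or_iff_right hγ]

theorem LipschitzWith.average {f : E → E} (hf : LipschitzWith 1 f) {γ : ℝ}
    (hγ : γ ∈ Set.Icc (0 : ℝ) 1) : LipschitzWith 1 fun x => γ • f x + (1 - γ) • x := by
  refine LipschitzWith.mk_one fun x y => ?_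
  have h1γ : 0 ≤ 1 - γ := sub_nonneg.mpr hγ.2
  rw [dist_eq_norm, dist_eq_norm]
  calc ‖γ • f x + (1 - γ) • x - (γ • f y + (1 - γ) • y)‖
      = ‖γ • (f x - f y) + (1 - γ) • (x - y)‖ := by congr 1; module
    _ ≤ γ * ‖f x - f y‖ + (1 - γ) * ‖x - y‖ := by
        refine (norm_add_le _ _).trans_eq ?_
        rw [norm_smul_of_nonneg hγ.1, norm_smul_of_nonneg h1γ]
    _ ≤ γ * ‖x - y‖ + (1 - γ) * ‖x - y‖ := by
        have hfxy : ‖f x - f y‖ ≤ ‖x - y‖ := by simpa using hf.norm_sub_le x y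
        have hγ0 : 0 ≤ γ := hγ.1
        gcongr
    _ = ‖x - y‖ := by ring

theorem norm_average_sub_lt [StrictConvexSpace ℝ E] {f : E → E} {p : E}
    (hf : ∀ x, ‖f x - p‖ ≤ ‖x - p‖) {γ : ℝ} (hγ : γ ∈ Set.Ioo (0 : ℝ) 1) {x : E}
    (hx : γ • f x + (1 - γ) • x ≠ x) : ‖γ • f x + (1 - γ) • x - p‖ < ‖x - p‖ := by
  have hfx : f x - p ≠ x - p := fun h =>
    hx ((average_eq_self_iff hγ.1.ne' f x).mpr (sub_left_injective h))
  calc ‖γ • f x + (1 - γ) • x - p‖ = ‖γ • (f x - p) + (1 - γ) • (x - p)‖ := by congr 1; module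
    _ < ‖x - p‖ := norm_combo_lt_of_ne (hf x) le_rfl hfx hγ.1 (sub_pos.mpr hγ.2) (by ring)

end Averaging

/-- The recursion defining the W-mapping `U n`; it constrains `V k` only for `k ≤ n + 1`. -/
structure IsWMapping {E : Type*} [NormedAddCommGroup E] [NormedSpace ℝ E]
    (T : ℕ → E → E) (γ : ℕ → ℝ) (n : ℕ) (V : ℕ → E → E) : Prop where
  top : V (n + 1) = id
  step : ∀ k ≤ n, ∀ x, V k x = γ k • T k (V (k + 1) x) + (1 - γ k) • x

namespace IsWMapping

variable {E : Type*} [NormedAddCommGroup E] [NormedSpace ℝ E]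
  {T : ℕ → E → E} {γ : ℕ → ℝ} {n : ℕ} {V : ℕ → E → E}

theorem lipschitzWith_one (hV : IsWMapping T γ n V) (hT : ∀ k, LipschitzWith 1 (T k))
    (hγ : ∀ k, γ k ∈ Set.Icc (0 : ℝ) 1) {k : ℕ} (hk : k ≤ n + 1) : LipschitzWith 1 (V k) := by
  induction hk using Nat.decreasingInduction with
  | self => rw [hV.top]; exact LipschitzWith.id
  | of_succ k hk ih =>
    have hV_eq : V k = fun x => γ k • T k (V (k + 1) x) + (1 - γ k) • x :=
      funext (hV.step k (Nat.lt_succ_iff.mp hk))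
    have hTV : LipschitzWith 1 (T k ∘ V (k + 1)) := by simpa using (hT k).comp ih
    rw [hV_eq]
    exact hTV.average (hγ k)

theorem apply_eq_self (hV : IsWMapping T γ n V) {q : E} {k : ℕ}
    (hq : ∀ j, k ≤ j → j ≤ n → T j q = q) (hk : k ≤ n + 1) : V k q = q := by
  induction hk using Nat.decreasingInduction with
  | self => rw [hV.top]; rfl
  | of_succ k hk ih =>
    rw [hV.step k (Nat.lt_succ_iff.mp hk), ih fun j hj hjn => hq j (by omega) hjn,
      hq k le_rfl (Nat.lt_succ_iff.mp hk)]
    module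

theorem norm_apply_sub_lt [StrictConvexSpace ℝ E] (hV : IsWMapping T γ n V)
    (hT : ∀ k, LipschitzWith 1 (T k)) (hγ : ∀ k, γ k ∈ Set.Ioo (0 : ℝ) 1) {p : E}
    (hp : ∀ j ≤ n, T j p = p) {k : ℕ} (hk : k ≤ n + 1) {x : E} (hx : V k x ≠ x) :
    ‖V k x - p‖ < ‖x - p‖ := by
  rcases hk.lt_or_eq with hk | rfl
  · have hkn := Nat.lt_succ_iff.mp hk
    have hVp : V (k + 1) p = p := hV.apply_eq_self (fun j _ hj => hp j hj) (by omega)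
    have hTV : ∀ y, ‖T k (V (k + 1) y) - p‖ ≤ ‖y - p‖ := fun y => by
      simpa [hp k hkn, hVp] using
        ((hT k).comp (hV.lipschitzWith_one hT (fun j => Set.Ioo_subset_Icc_self (hγ j))
          (Nat.succ_le_of_lt hk))).norm_sub_le y p
    rw [hV.step k hkn] at hx ⊢
    exact norm_average_sub_lt hTV (hγ k) hx
  · rw [hV.top] at hx
    exact absurd rfl hx

theorem apply_eq_self_iff [StrictConvexSpace ℝ E] (hV : IsWMapping T γ n V)
    (hT : ∀ k, LipschitzWith 1 (T k)) (hγ : ∀ k, γ k ∈ Set.Ioo (0 : ℝ) 1) {p : E}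
    (hp : ∀ j ≤ n, T j p = p) {k : ℕ} (hk : k ≤ n + 1) {x : E} :
    V k x = x ↔ ∀ j, k ≤ j → j ≤ n → T j x = x := by
  refine ⟨fun hx => ?_, fun hx => hV.apply_eq_self hx hk⟩
  induction hk using Nat.decreasingInduction with
  | self => intro j hj hjn; omega
  | of_succ k hk ih =>
    have hkn := Nat.lt_succ_iff.mp hk
    have hTV : T k (V (k + 1) x) = x :=
      (average_eq_self_iff (hγ k).1.ne' (T k ∘ V (k + 1)) x).mp (by rwa [hV.step k hkn] at hx)
    have hVx : V (k + 1) x = x := by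
      by_contra hne
      have hlt := hV.norm_apply_sub_lt hT hγ hp hk hne
      have hle : ‖T k (V (k + 1) x) - p‖ ≤ ‖V (k + 1) x - p‖ := by
        simpa [hp k hkn] using (hT k).norm_sub_le (V (k + 1) x) p
      rw [hTV] at hle
      exact hle.not_gt hlt
    intro j hj hjn
    rcases hj.lt_or_eq with hj | rfl
    · exact ih hVx j hj hjn
    · rwa [hVx] at hTV

end IsWMapping

theorem W_mapping_properties_general
    {H : Type*} [NormedAddCommGroup H] [InnerProductSpace ℝ H]
    (T : ℕ → H → H) (hT : ∀ n, ∀ x y : H, ‖T n x - T n y‖ ≤ ‖x - y‖)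
    (a b : ℝ) (ha : 0 < a) (hb : b < 1)
    (γ : ℕ → ℝ) (hγ : ∀ n, γ n ∈ Set.Icc a b)
    (U : ℕ → ℕ → H → H)
    (hU1 : ∀ n, U n (n + 1) = id)
    (hU2 : ∀ n k, k ≤ n → ∀ x : H, U n k x = γ k • T k (U n (k + 1) x) + (1 - γ k) • x)
    (S : ℕ → H → H) (hS : ∀ n (x : H), S n x = T 0 (U n 1 x)) :
    (∀ n, ∀ x y : H, ‖S n x - S n y‖ ≤ ‖x - y‖) ∧
    ((∃ p : H, ∀ k, T k p = p) →
      (⋂ n, {x : H | S n x = x}) = (⋂ n, {x : H | U n 0 x = x}) ∧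
      (⋂ n, {x : H | U n 0 x = x}) =
        (⋂ n, ⋂ k ∈ Finset.range (n + 1), {x : H | T k x = x}) ∧
      (⋂ n, ⋂ k ∈ Finset.range (n + 1), {x : H | T k x = x}) =
        (⋂ k, {x : H | T k x = x})) ∧
    (∀ n (x : H), U n 0 x = (1 - γ 0) • x + γ 0 • S n x) := by
  have hT_lip : ∀ k, LipschitzWith 1 (T k) := fun k =>
    LipschitzWith.mk_one fun x y => by simpa only [dist_eq_norm] using hT k x y
  have hγ_mem : ∀ k, γ k ∈ Set.Ioo (0 : ℝ) 1 := fun k =>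
    ⟨ha.trans_le (hγ k).1, (hγ k).2.trans_lt hb⟩
  have hW : ∀ n, IsWMapping T γ n (U n) := fun n => ⟨hU1 n, hU2 n⟩
  have hUS : ∀ n x, U n 0 x = γ 0 • S n x + (1 - γ 0) • x := fun n x => by
    rw [hS, hU2 n 0 n.zero_le]
  refine ⟨fun n x y => ?_, fun ⟨p, hp⟩ => ⟨?_, ?_, ?_⟩, fun n x => by rw [hUS, add_comm]⟩
  · have hS_lip : LipschitzWith 1 (S n) := by
      rw [show S n = T 0 ∘ U n 1 from funext (hS n)]
      simpa using (hT_lip 0).comp ((hW n).lipschitzWith_one hT_lip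
        (fun k => Set.Ioo_subset_Icc_self (hγ_mem k)) (k := 1) (by omega))
    simpa using hS_lip.norm_sub_le x y
  · refine Set.iInter_congr fun n => Set.ext fun x => ?_
    simp only [Set.mem_ofPred_eq, hUS, average_eq_self_iff (hγ_mem 0).1.ne']
  · refine Set.iInter_congr fun n => Set.ext fun x => ?_
    simp only [Set.mem_ofPred_eq, Set.mem_iInter, Finset.mem_range, Nat.lt_succ_iff,
      (hW n).apply_eq_self_iff hT_lip hγ_mem (fun j _ => hp j) (Nat.zero_le _), zero_le,
      true_imp_iff]
  · ext x
    simp only [Set.mem_iInter, Finset.mem_range, Set.mem_ofPred_eq]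
    exact ⟨fun h k => h k k k.lt_succ_self, fun h _ k _ => h k⟩

/-- Properties of the W-mappings `U_{n,k} = γ_k T_k U_{n,k+1} + (1 - γ_k) I`
(here indexed from `0`) and of `S_n = T_0 ∘ U_{n,1}`: each `S_n` is nonexpansive,
the common fixed point sets of `{S_n}`, of `{U_{n,0}}`, and of `{T_k}` coincide
(provided the `T_k` have a common fixed point), and
`U_{n,0} x = (1 - γ_0) x + γ_0 S_n x`. -/
theorem W_mapping_properties
    {H : Type*} [NormedAddCommGroup H] [InnerProductSpace ℝ H] [CompleteSpace H]
    (T : ℕ → H → H) (hT : ∀ n, ∀ x y : H, ‖T n x - T n y‖ ≤ ‖x - y‖)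
    (a b : ℝ) (ha : 0 < a) (hab : a ≤ b) (hb : b < 1)
    (γ : ℕ → ℝ) (hγ : ∀ n, γ n ∈ Set.Icc a b)
    (U : ℕ → ℕ → H → H)
    (hU1 : ∀ n, U n (n + 1) = id)
    (hU2 : ∀ n k, k ≤ n → ∀ x : H, U n k x = γ k • T k (U n (k + 1) x) + (1 - γ k) • x)
    (S : ℕ → H → H) (hS : ∀ n (x : H), S n x = T 0 (U n 1 x)) :
    (∀ n, ∀ x y : H, ‖S n x - S n y‖ ≤ ‖x - y‖) ∧
    ((∃ p : H, ∀ k, T k p = p) →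
      (⋂ n, {x : H | S n x = x}) = (⋂ n, {x : H | U n 0 x = x}) ∧
      (⋂ n, {x : H | U n 0 x = x}) =
        (⋂ n, ⋂ k ∈ Finset.range (n + 1), {x : H | T k x = x}) ∧
      (⋂ n, ⋂ k ∈ Finset.range (n + 1), {x : H | T k x = x}) =
        (⋂ k, {x : H | T k x = x})) ∧
    (∀ n (x : H), U n 0 x = (1 - γ 0) • x + γ 0 • S n x) :=
  W_mapping_properties_general T hT a b ha hb γ hγ U hU1 hU2 S hS
end
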